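/- Let V be a 3-dimensional oriented real inner product space with orthonormal basis {m, ḿ, m̂}, and consider the triad obtained by applying sign flips and/or permutations of the basis elements (i.e. composing with a signed permutation matrix). Then the associated tensor s^a_{bc} = 2Σ(m̂,ḿ) m^a m̂_{(b}ḿ_{c)} + 2Σ́(m̂,m) ḿ^a m̂_{(b}m_{c)} + 2Σ̂(m,ḿ) m̂^a m_{(b}ḿ_{c)} is unchanged by such transformations when the shear data are the corresponding contractions of fixed symmetric bilinear forms: signed permutations of an orthonormal triad produce the same tensor s. -/
import Mathlib


namespace Stmt15

noncomputable section

abbrev Idx := Fin 3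
abbrev Vec := Idx → ℝ
abbrev Ten2 := Idx → Idx → ℝ
abbrev Ten3 := Idx → Idx → Idx → ℝ

/-- Raise an index with the inverse metric: `u^a = g^{ab} u_b`. -/
def raise (ginv : Ten2) (u : Vec) : Vec := fun a => ∑ b, ginv a b * u b

/-- Scalar product of two covectors: `g^{ab} u_a v_b`. -/
def dotInv (ginv : Ten2) (u v : Vec) : ℝ := ∑ a, ∑ b, ginv a b * u a * v b

/-- Projector orthogonal to the unit covector `u`: `P_{ab} = g_{ab} - u_a u_b`. -/
def proj (g : Ten2) (u : Vec) : Ten2 := fun a b => g a b - u a * u b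

/-- Raise both indices of a covariant 2-tensor. -/
def raise2 (ginv : Ten2) (T : Ten2) : Ten2 := fun a b =>
  ∑ c, ∑ d, ginv a c * ginv b d * T c d

/-- Symmetrized product `X_{(b} Y_{c)}` of two covectors. -/
def sympair (u v : Vec) : Ten2 := fun b c => (u b * v c + u c * v b) / 2

/-- The tensor `s_{abc} = 2Σ₁ m_a m̂_{(b}ḿ_{c)} + 2Σ₂ ḿ_a m̂_{(b}m_{c)}
+ 2Σ₃ m̂_a m_{(b}ḿ_{c)}`. -/
def sForm (S1 S2 S3 : ℝ) (m m' m'' : Vec) : Ten3 := fun a b c =>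
  2 * S1 * m a * sympair m'' m' b c
    + 2 * S2 * m' a * sympair m'' m b c
    + 2 * S3 * m'' a * sympair m m' b c

/-- Crossed contraction `T(u,v) = T_{pq} u^p v^q` of a bilinear form with two
raised covectors. -/
def crossed (ginv : Ten2) (T : Ten2) (u v : Vec) : ℝ :=
  ∑ p, ∑ q, T p q * raise ginv u p * raise ginv v q

/-- The tensor `s_{abc}` built from a triad `e = (m, ḿ, m̂)` and an assignment
`S` of a shear (symmetric bilinear form) to each triad member:
`s_{abc} = 2Σ(m̂,ḿ) m_a m̂_{(b}ḿ_{c)} + 2Σ́(m̂,m) ḿ_a m̂_{(b}m_{c)}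
 + 2Σ̂(m,ḿ) m̂_a m_{(b}ḿ_{c)}`. -/
def sTriad (ginv : Ten2) (e : Fin 3 → Vec) (S : Fin 3 → Ten2) : Ten3 := fun a b c =>
  2 * crossed ginv (S 0) (e 2) (e 1) * e 0 a * sympair (e 2) (e 1) b c
    + 2 * crossed ginv (S 1) (e 2) (e 0) * e 1 a * sympair (e 2) (e 0) b c
    + 2 * crossed ginv (S 2) (e 0) (e 1) * e 2 a * sympair (e 0) (e 1) b c

lemma raise_smul (ginv : Ten2) (y : ℝ) (u : Vec) (p : Idx) :
    raise ginv (fun b => y * u b) p = y * raise ginv u p := by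
  unfold raise
  rw [Finset.mul_sum]
  exact Finset.sum_congr rfl fun b _ => by ring

lemma crossed_smul (ginv : Ten2) (T : Ten2) (u v : Vec) (x y z : ℝ) :
    crossed ginv (fun p q => x * T p q) (fun b => y * u b) (fun b => z * v b)
      = x * y * z * crossed ginv T u v := by
  unfold crossed
  simp only [Finset.mul_sum]
  refine Finset.sum_congr rfl fun p _ => Finset.sum_congr rfl fun q _ => ?_
  rw [raise_smul, raise_smul]; ring

lemma crossed_swap (ginv : Ten2) (T : Ten2) (hT : ∀ p q, T p q = T q p) (u v : Vec) :
    crossed ginv T u v = crossed ginv T v u := by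
  unfold crossed
  rw [Finset.sum_comm]
  exact Finset.sum_congr rfl fun p _ => Finset.sum_congr rfl fun q _ => by
    rw [hT]; ring

lemma sympair_swap (u v : Vec) (b c : Idx) :
    sympair u v b c = sympair v u b c := by
  unfold sympair; ring

lemma sympair_smul (y z : ℝ) (u v : Vec) (b c : Idx) :
    sympair (fun p => y * u p) (fun p => z * v p) b c = y * z * sympair u v b c := by
  unfold sympair; ring

lemma cancel_eps (x y z C X Y : ℝ) (hx : x * x = 1) (hy : y * y = 1) (hz : z * z = 1) :
    2 * (x * y * z * C) * (x * X) * (y * z * Y) = 2 * C * X * Y := by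
  have h : 2 * (x * y * z * C) * (x * X) * (y * z * Y)
      = (x * x) * ((y * y) * ((z * z) * (2 * C * X * Y))) := by ring
  rw [h, hx, hy, hz]; ring

lemma perm_next (σ : Equiv.Perm (Fin 3)) (i : Fin 3) :
    (σ (i + 1) = σ i + 1 ∧ σ (i + 2) = σ i + 2) ∨
    (σ (i + 1) = σ i + 2 ∧ σ (i + 2) = σ i + 1) := by
  revert i
  revert σ
  decide

/-- Signed permutations of an orthonormal triad ---permuting
and sign-flipping both the triad vectors and their associated shear forms---
produce the same tensor `s`. -/
theorem sTriad_invariant_under_signed_permutations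
    (g ginv : Ten2)
    (gsym : ∀ a b, g a b = g b a)
    (ginvsym : ∀ a b, ginv a b = ginv b a)
    (ginverse : ∀ a b, (∑ c, g a c * ginv c b) = if a = b then 1 else 0)
    (gposdef : ∀ v : Vec, v ≠ 0 → 0 < ∑ a, ∑ b, g a b * v a * v b)
    (e : Fin 3 → Vec)
    (horth : ∀ i j, dotInv ginv (e i) (e j) = if i = j then 1 else 0)
    (S : Fin 3 → Ten2)
    (hSsym : ∀ i p q, S i p q = S i q p)
    (hSann : ∀ i p, (∑ q, raise ginv (e i) q * S i p q) = 0)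
    (σ : Equiv.Perm (Fin 3)) (ε : Fin 3 → ℝ) (hε : ∀ i, ε i = 1 ∨ ε i = -1) :
    sTriad ginv (fun i a => ε i * e (σ i) a) (fun i p q => ε i * S (σ i) p q)
      = sTriad ginv e S := by
  funext a b c
  have hε2 : ∀ i, ε i * ε i = 1 := fun i => by
    rcases hε i with h | h <;> rw [h] <;> norm_num
  set G : Fin 3 → ℝ := fun i =>
    2 * crossed ginv (S i) (e (i + 1)) (e (i + 2)) * e i a
      * sympair (e (i + 1)) (e (i + 2)) b c with hG
  have key : ∀ i : Fin 3,
      2 * crossed ginv (fun p q => ε i * S (σ i) p q)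
          (fun p => ε (i + 1) * e (σ (i + 1)) p) (fun p => ε (i + 2) * e (σ (i + 2)) p)
        * (ε i * e (σ i) a)
        * sympair (fun p => ε (i + 1) * e (σ (i + 1)) p)
            (fun p => ε (i + 2) * e (σ (i + 2)) p) b c
        = G (σ i) := by
    intro i
    rw [crossed_smul, sympair_smul, hG]
    rcases perm_next σ i with ⟨h1, h2⟩ | ⟨h1, h2⟩
    · rw [h1, h2]
      exact cancel_eps _ _ _ _ _ _ (hε2 i) (hε2 (i + 1)) (hε2 (i + 2))
    · rw [h1, h2, crossed_swap ginv _ (hSsym (σ i)), sympair_swap]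
      exact cancel_eps _ _ _ _ _ _ (hε2 i) (hε2 (i + 1)) (hε2 (i + 2))
  have h01 : ((0 : Fin 3) + 1) = 1 := rfl
  have h02 : ((0 : Fin 3) + 2) = 2 := rfl
  have h11 : ((1 : Fin 3) + 1) = 2 := rfl
  have h12 : ((1 : Fin 3) + 2) = 0 := rfl
  have h21 : ((2 : Fin 3) + 1) = 0 := rfl
  have h22 : ((2 : Fin 3) + 2) = 1 := rfl
  have key0 := key 0
  have key1 := key 1
  have key2 := key 2
  rw [h01, h02] at key0
  rw [h11, h12] at key1
  rw [h21, h22] at key2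
  have hsum : G (σ 0) + G (σ 1) + G (σ 2) = G 0 + G 1 + G 2 := by
    have := Equiv.sum_comp σ G
    simpa [Fin.sum_univ_three] using this
  show
    2 * crossed ginv (fun p q => ε 0 * S (σ 0) p q)
        (fun p => ε 2 * e (σ 2) p) (fun p => ε 1 * e (σ 1) p)
      * (ε 0 * e (σ 0) a)
      * sympair (fun p => ε 2 * e (σ 2) p) (fun p => ε 1 * e (σ 1) p) b c
    + 2 * crossed ginv (fun p q => ε 1 * S (σ 1) p q)
        (fun p => ε 2 * e (σ 2) p) (fun p => ε 0 * e (σ 0) p)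
      * (ε 1 * e (σ 1) a)
      * sympair (fun p => ε 2 * e (σ 2) p) (fun p => ε 0 * e (σ 0) p) b c
    + 2 * crossed ginv (fun p q => ε 2 * S (σ 2) p q)
        (fun p => ε 0 * e (σ 0) p) (fun p => ε 1 * e (σ 1) p)
      * (ε 2 * e (σ 2) a)
      * sympair (fun p => ε 0 * e (σ 0) p) (fun p => ε 1 * e (σ 1) p) b c
    = 2 * crossed ginv (S 0) (e 2) (e 1) * e 0 a * sympair (e 2) (e 1) b c
      + 2 * crossed ginv (S 1) (e 2) (e 0) * e 1 a * sympair (e 2) (e 0) b c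
      + 2 * crossed ginv (S 2) (e 0) (e 1) * e 2 a * sympair (e 0) (e 1) b c
  have hS'sym : ∀ p q, (fun p q => ε 0 * S (σ 0) p q) p q
      = (fun p q => ε 0 * S (σ 0) p q) q p := fun p q => by
    simp only []; rw [hSsym]
  rw [crossed_swap ginv _ hS'sym, sympair_swap (fun p => ε 2 * e (σ 2) p)]
  rw [crossed_swap ginv (S 0) (hSsym 0) (e 2) (e 1), sympair_swap (e 2) (e 1)]
  rw [key0, key1, key2, hsum]
  simp only [hG, h01, h02, h11, h12, h21, h22]

end
end Stmt15
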